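/- Fix m ∈ ℕ, α, ε ∈ (0,1), and view the SynthBH rejection index k* = k*(𝐩) as a function of 𝐩 = (p_1,…,p_m,p̃_1,…,p̃_m) ∈ [0,1]^{2m}. Then k* is coordinatewise nonincreasing: for any 𝐩, 𝐪 ∈ [0,1]^{2m} with 𝐩 ⪯ 𝐪 (coordinatewise), k*(𝐩) ≥ k*(𝐪). -/

import Mathlib

noncomputable section

/-- The synthetic-powered p-value at level `δ`: `p̃^δ = p ∧ (p̃ ∨ (p − δ))`. -/
def sp (p pt δ : ℝ) : ℝ := min p (max pt (p - δ))

/-- The `k`-th smallest element (1-indexed) of a finite family of reals. -/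
def kthSmallest {m : ℕ} (v : Fin m → ℝ) (k : ℕ) : ℝ :=
  (List.insertionSort (· ≤ ·) (List.ofFn v)).getD (k - 1) 0

/-- The vector of synthetic-powered p-values with rank-adaptive guardrail `δ = kε/m`. -/
def spVec (m : ℕ) (ε : ℝ) (p pt : Fin m → ℝ) (k : ℕ) : Fin m → ℝ :=
  fun j => sp (p j) (pt j) (k * ε / m)

/-- The SynthBH rejection index `k* = max {k ∈ [m] : m·p̃_{(k)}^{kε/m}/k ≤ α}` (0 if none). -/
def kStar (m : ℕ) (α ε : ℝ) (p pt : Fin m → ℝ) : ℕ :=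
  ((Finset.Icc 1 m).filter
    (fun k => (m : ℝ) * kthSmallest (spVec m ε p pt k) k / k ≤ α)).sup id

/-- The SynthBH rejection index viewed as a function of the concatenated vector
`𝐩 = (p_1,…,p_m,p̃_1,…,p̃_m) ∈ ℝ^{2m}`. -/
def kStarVec (m : ℕ) (α ε : ℝ) (v : Fin (m + m) → ℝ) : ℕ :=
  kStar m α ε (fun j => v (Fin.castAdd m j)) (fun j => v (Fin.natAdd m j))

/-- If at least `i+1` elements of a sorted list are `≤ x`, then the `i`-th entry is `≤ x`. -/
lemma sorted_getElem_le_of_lt_countP {l : List ℝ} (hs : l.Pairwise (· ≤ ·)) {i : ℕ}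
    (hi : i < l.length) {x : ℝ} (h : i < l.countP (fun a => decide (a ≤ x))) :
    l[i] ≤ x := by
  by_contra hx
  push_neg at hx
  have hdrop : (l.drop i).countP (fun a => decide (a ≤ x)) = 0 := by
    rw [List.countP_eq_zero]
    intro a ha
    obtain ⟨j, hj, rfl⟩ := List.mem_iff_getElem.1 ha
    have hj' : j < l.length - i := by simpa [List.length_drop] using hj
    rw [List.getElem_drop]
    simp only [decide_eq_true_eq, not_le]
    refine lt_of_lt_of_le hx ?_
    have h2 : l.get ⟨i, hi⟩ ≤ l.get ⟨i + j, by omega⟩ :=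
      hs.rel_get_of_le (by simp [Fin.mk_le_mk])
    simpa [List.get_eq_getElem] using h2
  have hsplit : l.countP (fun a => decide (a ≤ x)) =
      (l.take i).countP (fun a => decide (a ≤ x)) +
      (l.drop i).countP (fun a => decide (a ≤ x)) := by
    rw [← List.countP_append, List.take_append_drop]
  have hle : l.countP (fun a => decide (a ≤ x)) ≤ i := by
    rw [hsplit, hdrop, Nat.add_zero]
    calc (l.take i).countP (fun a => decide (a ≤ x)) ≤ (l.take i).length :=
          List.countP_le_length
      _ ≤ i := by simp
  omega

/-- In a sorted list, at least `i+1` elements are `≤` the `i`-th entry. -/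
lemma lt_countP_of_sorted {l : List ℝ} (hs : l.Pairwise (· ≤ ·)) {i : ℕ}
    (hi : i < l.length) : i < l.countP (fun a => decide (a ≤ l[i])) := by
  have htake : (l.take (i + 1)).countP (fun a => decide (a ≤ l[i])) =
      (l.take (i + 1)).length := by
    rw [List.countP_eq_length]
    intro a ha
    obtain ⟨j, hj, rfl⟩ := List.mem_iff_getElem.1 ha
    rw [List.getElem_take]
    simp only [decide_eq_true_eq]
    have hjl : j < l.length := lt_of_lt_of_le hj (by simp [List.length_take])
    have hji : j ≤ i := by
      have := hj
      simp [List.length_take] at this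
      omega
    have h2 : l.get ⟨j, hjl⟩ ≤ l.get ⟨i, hi⟩ :=
      hs.rel_get_of_le (by simp [Fin.mk_le_mk]; omega)
    simpa [List.get_eq_getElem] using h2
  have hsplit : l.countP (fun a => decide (a ≤ l[i])) =
      (l.take (i + 1)).countP (fun a => decide (a ≤ l[i])) +
      (l.drop (i + 1)).countP (fun a => decide (a ≤ l[i])) := by
    rw [← List.countP_append, List.take_append_drop]
  have hlen : (l.take (i + 1)).length = i + 1 := by
    simp [List.length_take]
    omega
  omega

/-- The `k`-th order statistic is coordinatewise monotone. -/
lemma kthSmallest_mono {m : ℕ} {v w : Fin m → ℝ} (h : ∀ j, v j ≤ w j) (k : ℕ) :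
    kthSmallest v k ≤ kthSmallest w k := by
  set lv := List.insertionSort (· ≤ ·) (List.ofFn v) with hlv
  set lw := List.insertionSort (· ≤ ·) (List.ofFn w) with hlw
  have hsv : lv.Pairwise (· ≤ ·) := List.pairwise_insertionSort _ _
  have hsw : lw.Pairwise (· ≤ ·) := List.pairwise_insertionSort _ _
  have hvlen : lv.length = m := by
    rw [hlv, List.length_insertionSort, List.length_ofFn]
  have hwlen : lw.length = m := by
    rw [hlw, List.length_insertionSort, List.length_ofFn]
  unfold kthSmallest
  rw [← hlv, ← hlw]
  by_cases hk : k - 1 < m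
  · rw [List.getD_eq_getElem _ _ (by omega), List.getD_eq_getElem _ _ (by omega)]
    set i := k - 1
    set x := lw[i]'(by omega)
    have hcw : i < lw.countP (fun a => decide (a ≤ x)) :=
      lt_countP_of_sorted hsw (by omega)
    have hofn : ∀ f : Fin m → ℝ, (List.ofFn f).countP (fun a => decide (a ≤ x)) =
        (List.finRange m).countP (fun j => decide (f j ≤ x)) := by
      intro f
      rw [List.ofFn_eq_map, List.countP_map]
      rfl
    have hcv : i < lv.countP (fun a => decide (a ≤ x)) := by
      have h1 : lw.countP (fun a => decide (a ≤ x)) =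
          (List.ofFn w).countP (fun a => decide (a ≤ x)) :=
        (List.perm_insertionSort _ _).countP_eq _
      have h2 : lv.countP (fun a => decide (a ≤ x)) =
          (List.ofFn v).countP (fun a => decide (a ≤ x)) :=
        (List.perm_insertionSort _ _).countP_eq _
      have h3 : (List.ofFn w).countP (fun a => decide (a ≤ x)) ≤
          (List.ofFn v).countP (fun a => decide (a ≤ x)) := by
        rw [hofn v, hofn w]
        apply List.countP_mono_left
        intro j _ hj
        simp only [decide_eq_true_eq] at hj ⊢
        exact le_trans (h j) hj
      omega
    exact sorted_getElem_le_of_lt_countP hsv (by omega) hcv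
  · rw [List.getD_eq_default _ _ (by omega), List.getD_eq_default _ _ (by omega)]

/-- `sp` is monotone in `(p, p̃)`. -/
lemma sp_mono {p p' pt pt' δ : ℝ} (hp : p ≤ p') (hpt : pt ≤ pt') :
    sp p pt δ ≤ sp p' pt' δ :=
  min_le_min hp (max_le_max hpt (by linarith))

/-- **The SynthBH rejection index is coordinatewise nonincreasing**: for
`𝐩, 𝐪 ∈ [0,1]^{2m}` with `𝐩 ⪯ 𝐪` coordinatewise, `k*(𝐩) ≥ k*(𝐪)`. -/
theorem kStar_antitone
    (m : ℕ) (α ε : ℝ) (hα : α ∈ Set.Ioo (0 : ℝ) 1) (hε : ε ∈ Set.Ioo (0 : ℝ) 1)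
    (v w : Fin (m + m) → ℝ)
    (hv : ∀ i, v i ∈ Set.Icc (0 : ℝ) 1) (hw : ∀ i, w i ∈ Set.Icc (0 : ℝ) 1)
    (hle : ∀ i, v i ≤ w i) :
    kStarVec m α ε w ≤ kStarVec m α ε v := by
  unfold kStarVec kStar
  apply Finset.sup_mono
  intro k hk
  simp only [Finset.mem_filter, Finset.mem_Icc] at hk ⊢
  obtain ⟨⟨hk1, hkm⟩, hcond⟩ := hk
  refine ⟨⟨hk1, hkm⟩, le_trans ?_ hcond⟩
  have hkth : kthSmallest (spVec m ε (fun j => v (Fin.castAdd m j))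
      (fun j => v (Fin.natAdd m j)) k) k ≤
      kthSmallest (spVec m ε (fun j => w (Fin.castAdd m j))
      (fun j => w (Fin.natAdd m j)) k) k := by
    apply kthSmallest_mono
    intro j
    exact sp_mono (hle _) (hle _)
  have hkpos : (0 : ℝ) < k := by exact_mod_cast hk1
  have hm : (0 : ℝ) ≤ m := Nat.cast_nonneg m
  exact (div_le_div_iff_of_pos_right hkpos).2 (mul_le_mul_of_nonneg_left hkth hm)

end
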